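/- Let r be a positive integer and define the extension Q sending a sequence z (defined on multi-indices of length ≤ 2r) to Q(z) defined on multi-indices of length ≤ 4r by Q(z)_{2α} = z_α for every multi-index α of length ≤ 2r, and Q(z)_β = 0 whenever β has at least one odd coordinate. If z is feasible for the level-r Schmüdgen moment relaxation (S-DGW-r), then Q(z) is feasible for the level-2r Putinar moment relaxation (P-DGW-2r) and has the same objective value; consequently val(P-DGW-2r) ≤ val(S-DGW-r). -/

import Mathlib

/-!
Under `π_{ij} = x_{ij}²` the sequence `Q(z)` is the pull-back of `z`: its Riesz functional sends
`f(x²)` to `L_z(f)` and kills `x^γ f(x²)` whenever `γ` has an odd coordinate. Grouping the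
monomials of `p` by the parity pattern `I` of their exponents, `p = ∑_I x^{1_I} p_I(x²)`, all
cross terms of `p²` die and `L_{Q(z)}(p²) = ∑_I L_z(e_I p_I²) ≥ 0` by the Schmüdgen constraints.
The Putinar equality constraints are the pull-backs of `r_i` and `c_j`; they vanish up to degree
`4r - 2` because the constraints on `r_i` and on `r_i π_{kl}` together reach degree `2r - 1`.
Finally the value inequality needs the Putinar objective to be bounded below, which follows from
`0 ≤ z̃_{2δ_{ij}+2δ_{kl}} ≤ |μ_i| |ν_l|`, read off the marginal constraints.
-/

open MvPolynomial

/-- The Riesz functional associated to a moment sequence `z`. -/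
noncomputable def riesz {σ : Type*} (z : (σ →₀ ℕ) → ℝ) (p : MvPolynomial σ ℝ) : ℝ :=
  ∑ α ∈ p.support, MvPolynomial.coeff α p * z α

/-- The total degree (length) of a multi-index. -/
def mdeg {σ : Type*} (α : σ →₀ ℕ) : ℕ := α.sum fun _ e => e

/-- Positive semidefiniteness of the truncated localizing matrix `M_t(g z)`:
the associated quadratic form is nonnegative on coefficient vectors of
polynomials of degree at most `t`. -/
def locPSD {σ : Type*} (z : (σ →₀ ℕ) → ℝ) (g : MvPolynomial σ ℝ) (t : ℕ) : Prop :=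
  ∀ p : MvPolynomial σ ℝ, p.totalDegree ≤ t → 0 ≤ riesz z (g * p ^ 2)

/-- Vanishing of the truncated localizing matrix `M_t(g z)`: all entries are zero. -/
def locZero {σ : Type*} (z : (σ →₀ ℕ) → ℝ) (g : MvPolynomial σ ℝ) (t : ℕ) : Prop :=
  ∀ α β : σ →₀ ℕ, mdeg α ≤ t → mdeg β ≤ t →
    riesz z (g * monomial α 1 * monomial β 1) = 0

/-- The row-marginal polynomial `r_i(π) = ∑_j π_{ij} - μ_i`. -/
noncomputable def rowPoly (a b : ℕ) (μ : Fin a → ℝ) (i : Fin a) :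
    MvPolynomial (Fin a × Fin b) ℝ :=
  (∑ j, X (i, j)) - C (μ i)

/-- The column-marginal polynomial `c_j(π) = ∑_i π_{ij} - ν_j`. -/
noncomputable def colPoly (a b : ℕ) (ν : Fin b → ℝ) (j : Fin b) :
    MvPolynomial (Fin a × Fin b) ℝ :=
  (∑ i, X (i, j)) - C (ν j)

/-- The monomial `e_I = ∏_{(i,j) ∈ I} π_{ij}`. -/
noncomputable def eI {a b : ℕ} (I : Finset (Fin a × Fin b)) : MvPolynomial (Fin a × Fin b) ℝ :=
  ∏ q ∈ I, X q

/-- A probability vector: nonnegative entries summing to 1. -/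
def IsProbVec {a : ℕ} (μ : Fin a → ℝ) : Prop := (∀ i, 0 ≤ μ i) ∧ ∑ i, μ i = 1

/-- Feasibility for the level-`r` Schmüdgen moment relaxation (S-DGW-r). -/
def SFeas (a b r : ℕ) (μ : Fin a → ℝ) (ν : Fin b → ℝ)
    (z : ((Fin a × Fin b) →₀ ℕ) → ℝ) : Prop :=
  z 0 = 1 ∧
  (∀ I : Finset (Fin a × Fin b), I.card ≤ 2 * r → locPSD z (eI I) (r - (I.card + 1) / 2)) ∧
  (∀ i, locZero z (rowPoly a b μ i) (r - 1)) ∧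
  (∀ j, locZero z (colPoly a b ν j) (r - 1)) ∧
  (∀ i₁ i₂ : Fin a, ∀ j : Fin b, locZero z (rowPoly a b μ i₁ * X (i₂, j)) (r - 1)) ∧
  (∀ j₁ j₂ : Fin b, ∀ i : Fin a, locZero z (colPoly a b ν j₁ * X (i, j₂)) (r - 1))

/-- The objective of the Schmüdgen moment relaxation. -/
noncomputable def objS (a b : ℕ) (L : Fin a → Fin b → Fin a → Fin b → ℝ)
    (z : ((Fin a × Fin b) →₀ ℕ) → ℝ) : ℝ :=
  ∑ i, ∑ j, ∑ k, ∑ l, L i j k l * z (Finsupp.single (i, j) 1 + Finsupp.single (k, l) 1)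

/-- The optimal value of the level-`r` Schmüdgen moment relaxation. -/
noncomputable def valS (a b r : ℕ) (μ : Fin a → ℝ) (ν : Fin b → ℝ)
    (L : Fin a → Fin b → Fin a → Fin b → ℝ) : ℝ :=
  sInf {v : ℝ | ∃ z, SFeas a b r μ ν z ∧ v = objS a b L z}

/-- Feasibility for the level-`s` Putinar moment relaxation (P-DGW-s), in squared variables. -/
def PFeas (a b s : ℕ) (μ : Fin a → ℝ) (ν : Fin b → ℝ)
    (z : ((Fin a × Fin b) →₀ ℕ) → ℝ) : Prop :=
  z 0 = 1 ∧ locPSD z 1 s ∧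
  (∀ i, locZero z (C (μ i) - ∑ j, X (i, j) ^ 2) (s - 1)) ∧
  (∀ j, locZero z (C (ν j) - ∑ i, X (i, j) ^ 2) (s - 1))

/-- The objective of the Putinar moment relaxation. -/
noncomputable def objP (a b : ℕ) (L : Fin a → Fin b → Fin a → Fin b → ℝ)
    (z : ((Fin a × Fin b) →₀ ℕ) → ℝ) : ℝ :=
  ∑ i, ∑ j, ∑ k, ∑ l, L i j k l * z (Finsupp.single (i, j) 2 + Finsupp.single (k, l) 2)

/-- The optimal value of the level-`s` Putinar moment relaxation. -/
noncomputable def valP (a b s : ℕ) (μ : Fin a → ℝ) (ν : Fin b → ℝ)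
    (L : Fin a → Fin b → Fin a → Fin b → ℝ) : ℝ :=
  sInf {v : ℝ | ∃ z, PFeas a b s μ ν z ∧ v = objP a b L z}

section Riesz
variable {σ : Type*} (z : (σ →₀ ℕ) → ℝ)

noncomputable def rieszLinear : MvPolynomial σ ℝ →ₗ[ℝ] ℝ :=
  Finsupp.linearCombination ℝ z ∘ₗ (AddMonoidAlgebra.coeffLinearEquiv ℝ).toLinearMap

lemma riesz_add (p q : MvPolynomial σ ℝ) : riesz z (p + q) = riesz z p + riesz z q :=
  map_add (rieszLinear z) p q

lemma riesz_neg (p : MvPolynomial σ ℝ) : riesz z (-p) = -riesz z p :=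
  map_neg (rieszLinear z) p

lemma riesz_sub (p q : MvPolynomial σ ℝ) : riesz z (p - q) = riesz z p - riesz z q :=
  map_sub (rieszLinear z) p q

lemma riesz_sum {ι : Type*} (s : Finset ι) (f : ι → MvPolynomial σ ℝ) :
    riesz z (∑ i ∈ s, f i) = ∑ i ∈ s, riesz z (f i) :=
  map_sum (rieszLinear z) f s

lemma riesz_monomial (α : σ →₀ ℕ) (c : ℝ) : riesz z (monomial α c) = c * z α :=
  Finsupp.linearCombination_single ℝ c α

end Riesz

lemma riesz_congr {σ : Type*} {z w : (σ →₀ ℕ) → ℝ} {p : MvPolynomial σ ℝ}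
    (h : ∀ α ∈ p.support, z α = w α) : riesz z p = riesz w p :=
  Finset.sum_congr rfl fun α hα => by rw [h α hα]

section MultiIndex
variable {σ : Type*}

lemma mdeg_eq_degree (α : σ →₀ ℕ) : mdeg α = α.degree := rfl

lemma mdeg_le_totalDegree {p : MvPolynomial σ ℝ} {α : σ →₀ ℕ} (h : α ∈ p.support) :
    mdeg α ≤ p.totalDegree :=
  le_totalDegree h

lemma totalDegree_monomial_le_mdeg (α : σ →₀ ℕ) (c : ℝ) : (monomial α c).totalDegree ≤ mdeg α :=
  totalDegree_monomial_le α c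

lemma exists_add_of_mdeg_le_add {η : σ →₀ ℕ} {s t : ℕ} (h : mdeg η ≤ s + t) :
    ∃ η₁ η₂, η = η₁ + η₂ ∧ mdeg η₁ ≤ s ∧ mdeg η₂ ≤ t := by
  obtain ⟨η₁, hle, hdeg⟩ := η.exists_le_degree_eq (min s η.degree) (min_le_right _ _)
  refine ⟨η₁, η - η₁, (add_tsub_cancel_of_le hle).symm, by rw [mdeg_eq_degree]; omega, ?_⟩
  have := congrArg Finsupp.degree (add_tsub_cancel_of_le hle)
  rw [map_add] at this
  rw [mdeg_eq_degree] at h ⊢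
  omega

noncomputable def half (β : σ →₀ ℕ) : σ →₀ ℕ := β.mapRange (· / 2) (Nat.zero_div 2)

lemma half_apply (β : σ →₀ ℕ) (q : σ) : half β q = β q / 2 := Finsupp.mapRange_apply

lemma half_two_nsmul (α : σ →₀ ℕ) : half (2 • α) = α := by
  ext q; simp [half_apply]

lemma two_nsmul_half {β : σ →₀ ℕ} (h : ∀ q, Even (β q)) : 2 • half β = β := by
  ext q; obtain ⟨k, hk⟩ := h q; simp [half_apply, hk]; omega

open Classical in
/-- The paper's `Q(z)`. -/
noncomputable def evenExt (z : (σ →₀ ℕ) → ℝ) (β : σ →₀ ℕ) : ℝ :=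
  if ∀ q, Even (β q) then z (half β) else 0

variable (z : (σ →₀ ℕ) → ℝ)

lemma evenExt_two_nsmul (α : σ →₀ ℕ) : evenExt z (2 • α) = z α := by
  rw [evenExt, if_pos fun q => by simp, half_two_nsmul]

lemma evenExt_of_odd {β : σ →₀ ℕ} (h : ∃ q, Odd (β q)) : evenExt z β = 0 := by
  obtain ⟨q, hq⟩ := h
  rw [evenExt, if_neg fun he => Nat.not_even_iff_odd.mpr hq (he q)]

lemma eq_evenExt {w : (σ →₀ ℕ) → ℝ} {k : ℕ} (heven : ∀ α, mdeg α ≤ k → w (2 • α) = z α)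
    (hodd : ∀ β : σ →₀ ℕ, (∃ q, Odd (β q)) → w β = 0) {γ : σ →₀ ℕ} (hγ : mdeg γ ≤ 2 * k) :
    w γ = evenExt z γ := by
  by_cases h : ∀ q, Even (γ q)
  · rw [← two_nsmul_half h, evenExt_two_nsmul]
    refine heven _ ?_
    rw [← two_nsmul_half h, mdeg_eq_degree, map_nsmul, smul_eq_mul] at hγ
    rw [mdeg_eq_degree]
    omega
  · obtain ⟨q, hq⟩ := not_forall.mp h
    have hodd' : ∃ q, Odd (γ q) := ⟨q, Nat.not_even_iff_odd.mp hq⟩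
    rw [hodd γ hodd', evenExt_of_odd z hodd']

lemma riesz_evenExt_expand (f : MvPolynomial σ ℝ) : riesz (evenExt z) (expand 2 f) = riesz z f := by
  induction f using MvPolynomial.induction_on' with
  | monomial α c => rw [expand_monomial, riesz_monomial, riesz_monomial, evenExt_two_nsmul]
  | add f g hf hg => rw [map_add, riesz_add, riesz_add, hf, hg]

lemma riesz_evenExt_monomial_mul_expand {γ : σ →₀ ℕ} (hγ : ∃ q, Odd (γ q)) (c : ℝ)
    (f : MvPolynomial σ ℝ) : riesz (evenExt z) (monomial γ c * expand 2 f) = 0 := by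
  induction f using MvPolynomial.induction_on' with
  | monomial α a =>
    obtain ⟨q, hq⟩ := hγ
    rw [expand_monomial, monomial_mul, riesz_monomial,
      evenExt_of_odd z ⟨q, by simpa using hq.add_even (even_two_mul (α q))⟩, mul_zero]
  | add f g hf hg => rw [map_add, mul_add, riesz_add, hf, hg, add_zero]

end MultiIndex

section Parity
variable {σ : Type*}

noncomputable def indicatorIndex (I : Finset σ) : σ →₀ ℕ := ∑ q ∈ I, Finsupp.single q 1

lemma indicatorIndex_apply [DecidableEq σ] (I : Finset σ) (q : σ) :
    indicatorIndex I q = if q ∈ I then 1 else 0 := by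
  simp [indicatorIndex, Finsupp.finsetSum_apply, Finsupp.single_apply]

lemma mdeg_indicatorIndex (I : Finset σ) : mdeg (indicatorIndex I) = I.card := by
  simp [mdeg_eq_degree, indicatorIndex, map_sum]

lemma prod_X_eq_monomial_indicatorIndex (I : Finset σ) :
    ∏ q ∈ I, (X q : MvPolynomial σ ℝ) = monomial (indicatorIndex I) 1 := by
  rw [indicatorIndex, monomial_sum_one]
  rfl

lemma exists_odd_indicatorIndex_add {I J : Finset σ} (h : I ≠ J) :
    ∃ q, Odd ((indicatorIndex I + indicatorIndex J) q) := by
  obtain ⟨q, hq⟩ : ∃ q, ¬(q ∈ I ↔ q ∈ J) := by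
    by_contra! hc
    exact h (Finset.ext hc)
  classical
  refine ⟨q, ?_⟩
  by_cases hI : q ∈ I <;> simp_all [indicatorIndex_apply]

def oddPart (β : σ →₀ ℕ) : Finset σ := β.support.filter fun q => Odd (β q)

lemma indicatorIndex_oddPart_add_two_nsmul_half (β : σ →₀ ℕ) :
    indicatorIndex (oddPart β) + 2 • half β = β := by
  classical
  ext q
  by_cases h : Odd (β q) <;> simp [indicatorIndex_apply, oddPart, half_apply, h] <;> grind

lemma mdeg_eq_card_oddPart_add (β : σ →₀ ℕ) :
    mdeg β = (oddPart β).card + 2 * mdeg (half β) := by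
  conv_lhs => rw [← indicatorIndex_oddPart_add_two_nsmul_half β]
  rw [← mdeg_indicatorIndex, mdeg_eq_degree, mdeg_eq_degree, mdeg_eq_degree, map_add, map_nsmul,
    smul_eq_mul]

variable [DecidableEq σ]

noncomputable def parityPart (p : MvPolynomial σ ℝ) (I : Finset σ) : MvPolynomial σ ℝ :=
  ∑ β ∈ p.support with oddPart β = I, monomial (half β) (coeff β p)

lemma sum_monomial_mul_expand_parityPart (p : MvPolynomial σ ℝ) :
    ∑ I ∈ p.support.image oddPart, monomial (indicatorIndex I) 1 * expand 2 (parityPart p I) =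
      p := by
  conv_rhs => rw [p.as_sum, ← Finset.sum_fiberwise_of_maps_to
    (fun β hβ => Finset.mem_image_of_mem oddPart hβ)]
  refine Finset.sum_congr rfl fun I _ => ?_
  rw [parityPart, map_sum, Finset.mul_sum]
  refine Finset.sum_congr rfl fun β hβ => ?_
  rw [expand_monomial, monomial_mul, one_mul, ← (Finset.mem_filter.mp hβ).2,
    indicatorIndex_oddPart_add_two_nsmul_half]

lemma totalDegree_parityPart_le (p : MvPolynomial σ ℝ) (I : Finset σ) :
    (parityPart p I).totalDegree ≤ (p.totalDegree - I.card) / 2 := by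
  refine (totalDegree_finsetSum _ _).trans (Finset.sup_le fun β hβ => ?_)
  obtain ⟨hβp, rfl⟩ := Finset.mem_filter.mp hβ
  have := mdeg_le_totalDegree hβp
  have := mdeg_eq_card_oddPart_add β
  have := totalDegree_monomial_le_mdeg (half β) (coeff β p)
  omega

variable (z : (σ →₀ ℕ) → ℝ)

lemma riesz_evenExt_sq (p : MvPolynomial σ ℝ) :
    riesz (evenExt z) (p ^ 2) =
      ∑ I ∈ p.support.image oddPart, riesz z ((∏ q ∈ I, X q) * parityPart p I ^ 2) := by
  set s := fun I => monomial (indicatorIndex I) (1 : ℝ) * expand 2 (parityPart p I)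
  have cross : ∀ I J, I ≠ J → riesz (evenExt z) (s I * s J) = 0 := by
    intro I J hIJ
    have : s I * s J = monomial (indicatorIndex I + indicatorIndex J) 1 *
        expand 2 (parityPart p I * parityPart p J) := by
      rw [map_mul, ← one_mul (1 : ℝ), ← monomial_mul]
      ring
    rw [this, riesz_evenExt_monomial_mul_expand z (exists_odd_indicatorIndex_add hIJ)]
  have diag : ∀ I, s I * s I = expand 2 ((∏ q ∈ I, X q) * parityPart p I ^ 2) := by
    intro I
    rw [prod_X_eq_monomial_indicatorIndex, map_mul, map_pow, expand_monomial, two_nsmul,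
      ← one_mul (1 : ℝ), ← monomial_mul]
    ring
  conv_lhs => rw [← sum_monomial_mul_expand_parityPart p, sq, Finset.sum_mul_sum]
  rw [riesz_sum]
  refine Finset.sum_congr rfl fun I hI => ?_
  rw [riesz_sum, Finset.sum_eq_single I (fun J _ hJI => cross I J hJI.symm)
    (fun h => (h hI).elim), diag, riesz_evenExt_expand]

theorem locPSD_evenExt {r : ℕ}
    (h : ∀ I : Finset σ, I.card ≤ 2 * r → locPSD z (∏ q ∈ I, X q) (r - (I.card + 1) / 2)) :
    locPSD (evenExt z) 1 (2 * r) := by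
  intro p hp
  rw [one_mul, riesz_evenExt_sq]
  refine Finset.sum_nonneg fun I hI => ?_
  obtain ⟨β, hβ, rfl⟩ := Finset.mem_image.mp hI
  have hcard : (oddPart β).card ≤ 2 * r := by
    have := mdeg_eq_card_oddPart_add β
    have := mdeg_le_totalDegree hβ
    omega
  refine h _ hcard _ ((totalDegree_parityPart_le p _).trans ?_)
  omega

end Parity

section Localizing
variable {σ : Type*} (z : (σ →₀ ℕ) → ℝ) {g : MvPolynomial σ ℝ}

lemma locZero.neg {t : ℕ} (h : locZero z g t) : locZero z (-g) t := fun α β hα hβ => by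
  rw [neg_mul, neg_mul, riesz_neg, h α β hα hβ, neg_zero]

lemma riesz_mul_monomial_eq_zero_of_locZero {t : ℕ} (h : locZero z g t) {η : σ →₀ ℕ}
    (hη : mdeg η ≤ t + t) : riesz z (g * monomial η 1) = 0 := by
  obtain ⟨η₁, η₂, rfl, h₁, h₂⟩ := exists_add_of_mdeg_le_add hη
  simpa [mul_assoc, monomial_mul] using h η₁ η₂ h₁ h₂

lemma riesz_mul_monomial_eq_zero_of_locZero_mul_X {t : ℕ} (h₀ : locZero z g t)
    (h₁ : ∀ q, locZero z (g * X q) t) {η : σ →₀ ℕ} (hη : mdeg η ≤ 2 * t + 1) :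
    riesz z (g * monomial η 1) = 0 := by
  obtain ⟨η₀, η', rfl, hη₀, hη'⟩ :=
    exists_add_of_mdeg_le_add (η := η) (s := 1) (t := t + t) (by omega)
  rcases Nat.le_one_iff_eq_zero_or_eq_one.mp hη₀ with hdeg | hdeg
  · rw [(Finsupp.degree_eq_zero_iff η₀).mp hdeg, zero_add]
    exact riesz_mul_monomial_eq_zero_of_locZero z h₀ hη'
  · obtain ⟨q, rfl⟩ : η₀ ∈ Set.range (Finsupp.single · 1) := Finsupp.range_single_one ▸ hdeg
    rw [← one_mul (1 : ℝ), ← monomial_mul, ← mul_assoc]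
    exact riesz_mul_monomial_eq_zero_of_locZero z (h₁ q) hη'

lemma locZero_evenExt_expand {k : ℕ} (h : ∀ η, mdeg η ≤ k → riesz z (g * monomial η 1) = 0) :
    locZero (evenExt z) (expand 2 g) k := by
  intro α β hα hβ
  rw [mul_assoc, monomial_mul, one_mul]
  by_cases he : ∀ q, Even ((α + β) q)
  · rw [← two_nsmul_half he, ← expand_monomial, ← map_mul, riesz_evenExt_expand]
    refine h _ ?_
    have := congrArg mdeg (two_nsmul_half he)
    rw [mdeg_eq_degree, mdeg_eq_degree, map_add, map_nsmul, smul_eq_mul] at this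
    rw [mdeg_eq_degree] at hα hβ ⊢
    omega
  · obtain ⟨q, hq⟩ := not_forall.mp he
    rw [mul_comm, riesz_evenExt_monomial_mul_expand z ⟨q, Nat.not_even_iff_odd.mp hq⟩]

end Localizing

section Congr
variable {σ : Type*} {z w : (σ →₀ ℕ) → ℝ} {d : ℕ}

lemma riesz_congr_of_totalDegree_le (hzw : ∀ γ, mdeg γ ≤ d → z γ = w γ)
    {p : MvPolynomial σ ℝ} (hp : p.totalDegree ≤ d) : riesz z p = riesz w p :=
  riesz_congr fun γ hγ => hzw γ ((mdeg_le_totalDegree hγ).trans hp)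

lemma locPSD.congr {g : MvPolynomial σ ℝ} {t : ℕ} (h : locPSD z g t)
    (hzw : ∀ γ, mdeg γ ≤ g.totalDegree + 2 * t → z γ = w γ) : locPSD w g t := fun p hp => by
  rw [← riesz_congr_of_totalDegree_le hzw]
  · exact h p hp
  · have := totalDegree_pow p 2
    have := totalDegree_mul g (p ^ 2)
    omega

lemma locZero.congr {g : MvPolynomial σ ℝ} {t : ℕ} (h : locZero z g t)
    (hzw : ∀ γ, mdeg γ ≤ g.totalDegree + 2 * t → z γ = w γ) : locZero w g t :=
  fun α β hα hβ => by
  rw [← riesz_congr_of_totalDegree_le hzw, h α β hα hβ]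
  have := totalDegree_mul (g * monomial α 1) (monomial β 1)
  have := totalDegree_mul g (monomial α 1)
  have := totalDegree_monomial_le_mdeg α 1
  have := totalDegree_monomial_le_mdeg β 1
  omega

end Congr

lemma totalDegree_C_sub_sum_X_sq_le {σ ι : Type*} (c : ℝ) (s : Finset ι) (v : ι → σ) :
    (C c - ∑ k ∈ s, X (v k) ^ 2 : MvPolynomial σ ℝ).totalDegree ≤ 2 := by
  refine (totalDegree_sub _ _).trans (max_le (by rw [totalDegree_C]; omega) ?_)
  refine (totalDegree_finsetSum _ _).trans (Finset.sup_le fun k _ => ?_)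
  rw [totalDegree_X_pow]

lemma riesz_C_sub_sum_X_sq_mul {σ ι : Type*} (w : (σ →₀ ℕ) → ℝ) (c : ℝ) (s : Finset ι)
    (v : ι → σ) (α β : σ →₀ ℕ) :
    riesz w ((C c - ∑ k ∈ s, X (v k) ^ 2) * monomial α 1 * monomial β 1) =
      c * w (α + β) - ∑ k ∈ s, w (α + β + Finsupp.single (v k) 2) := by
  simp only [monomial_mul, sub_mul, Finset.sum_mul, C_mul_monomial, X_pow_eq_monomial,
    riesz_sub, riesz_sum, riesz_monomial, mul_one, one_mul, add_assoc (Finsupp.single _ _),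
    add_comm (Finsupp.single _ _) (α + β)]

lemma single_two_add_single_two {σ : Type*} (x y : σ) :
    Finsupp.single x 2 + Finsupp.single y 2 = 2 • (Finsupp.single x 1 + Finsupp.single y 1) := by
  simp [smul_add, Finsupp.smul_single]

section Relaxations
variable {a b : ℕ} {μ : Fin a → ℝ} {ν : Fin b → ℝ}

lemma C_sub_sum_X_sq_row (i : Fin a) :
    C (μ i) - ∑ j, X (i, j) ^ 2 = -expand 2 (rowPoly a b μ i) := by
  simp [rowPoly]

lemma C_sub_sum_X_sq_col (j : Fin b) :
    C (ν j) - ∑ i, X (i, j) ^ 2 = -expand 2 (colPoly a b ν j) := by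
  simp [colPoly]

lemma SFeas.pFeas_evenExt {r : ℕ} {z : ((Fin a × Fin b) →₀ ℕ) → ℝ} (hr : 0 < r)
    (hz : SFeas a b r μ ν z) : PFeas a b (2 * r) μ ν (evenExt z) := by
  obtain ⟨h0, hpsd, hrow, hcol, hrowX, hcolX⟩ := hz
  have hdeg : 2 * r - 1 = 2 * (r - 1) + 1 := by omega
  refine ⟨?_, locPSD_evenExt z hpsd, fun i => ?_, fun j => ?_⟩
  · simpa [h0] using evenExt_two_nsmul z 0
  · rw [C_sub_sum_X_sq_row]
    refine (locZero_evenExt_expand z fun η hη => ?_).neg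
    exact riesz_mul_monomial_eq_zero_of_locZero_mul_X z (hrow i) (fun q => hrowX i q.1 q.2)
      (hdeg ▸ hη)
  · rw [C_sub_sum_X_sq_col]
    refine (locZero_evenExt_expand z fun η hη => ?_).neg
    exact riesz_mul_monomial_eq_zero_of_locZero_mul_X z (hcol j) (fun q => hcolX j q.2 q.1)
      (hdeg ▸ hη)

lemma objP_evenExt (L : Fin a → Fin b → Fin a → Fin b → ℝ) (z : ((Fin a × Fin b) →₀ ℕ) → ℝ) :
    objP a b L (evenExt z) = objS a b L z := by
  simp only [objP, objS, single_two_add_single_two, evenExt_two_nsmul]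

lemma PFeas.congr {s : ℕ} {z w : ((Fin a × Fin b) →₀ ℕ) → ℝ} (hs : 0 < s)
    (hz : PFeas a b s μ ν z) (hzw : ∀ γ, mdeg γ ≤ 2 * s → z γ = w γ) : PFeas a b s μ ν w := by
  obtain ⟨h0, hpsd, hrow, hcol⟩ := hz
  refine ⟨hzw 0 (Nat.zero_le _) ▸ h0, hpsd.congr (by simpa using hzw), fun i => ?_, fun j => ?_⟩
  · refine (hrow i).congr fun γ hγ => hzw γ ?_
    have := totalDegree_C_sub_sum_X_sq_le (μ i) Finset.univ (fun j : Fin b => (i, j))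
    omega
  · refine (hcol j).congr fun γ hγ => hzw γ ?_
    have := totalDegree_C_sub_sum_X_sq_le (ν j) Finset.univ (fun i : Fin a => (i, j))
    omega

section Bound
variable {s : ℕ} {w : ((Fin a × Fin b) →₀ ℕ) → ℝ}

lemma PFeas.nonneg_two_nsmul (hw : PFeas a b s μ ν w) {α : (Fin a × Fin b) →₀ ℕ}
    (hα : mdeg α ≤ s) : 0 ≤ w (2 • α) := by
  simpa [monomial_pow, riesz_monomial] using
    hw.2.1 (monomial α 1) ((totalDegree_monomial_le_mdeg α 1).trans hα)

lemma PFeas.nonneg_single_two (hs : 1 ≤ s) (hw : PFeas a b s μ ν w) (q : Fin a × Fin b) :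
    0 ≤ w (Finsupp.single q 2) := by
  simpa [Finsupp.smul_single] using
    hw.nonneg_two_nsmul (α := Finsupp.single q 1) (by simpa [mdeg_eq_degree] using hs)

lemma PFeas.single_two_le (hs : 1 ≤ s) (hw : PFeas a b s μ ν w) (k : Fin a) (l : Fin b) :
    w (Finsupp.single (k, l) 2) ≤ ν l := by
  have hcol := hw.2.2.2 l 0 0 (by simp [mdeg_eq_degree]) (by simp [mdeg_eq_degree])
  rw [riesz_C_sub_sum_X_sq_mul, add_zero, hw.1, mul_one, sub_eq_zero] at hcol
  simp only [zero_add] at hcol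
  rw [hcol]
  refine Finset.single_le_sum (f := fun i => w (Finsupp.single (i, l) 2))
    (fun i _ => hw.nonneg_single_two hs (i, l)) (Finset.mem_univ k)

lemma PFeas.single_two_add_single_two_le (hs : 2 ≤ s) (hw : PFeas a b s μ ν w)
    (i k : Fin a) (j l : Fin b) :
    w (Finsupp.single (i, j) 2 + Finsupp.single (k, l) 2) ≤ μ i * w (Finsupp.single (k, l) 2) := by
  have hrow := hw.2.2.1 i (Finsupp.single (k, l) 1) (Finsupp.single (k, l) 1)
    (by simp [mdeg_eq_degree]; omega) (by simp [mdeg_eq_degree]; omega)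
  rw [riesz_C_sub_sum_X_sq_mul, sub_eq_zero, ← two_nsmul, Finsupp.smul_single, smul_eq_mul] at hrow
  rw [hrow, add_comm]
  refine Finset.single_le_sum (f := fun j => w (Finsupp.single (k, l) 2 + Finsupp.single (i, j) 2))
    (fun j _ => ?_) (Finset.mem_univ j)
  rw [single_two_add_single_two]
  exact hw.nonneg_two_nsmul (by simp [mdeg_eq_degree]; omega)

lemma neg_abs_mul_le_mul {c t B : ℝ} (ht : 0 ≤ t) (htB : t ≤ B) : -(|c| * B) ≤ c * t := by
  refine neg_le_of_abs_le ((abs_mul c t).trans_le ?_)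
  rw [abs_of_nonneg ht]
  exact mul_le_mul_of_nonneg_left htB (abs_nonneg c)

lemma bddBelow_objP (hs : 2 ≤ s) (L : Fin a → Fin b → Fin a → Fin b → ℝ) :
    BddBelow {v | ∃ w, PFeas a b s μ ν w ∧ v = objP a b L w} := by
  refine ⟨-∑ i, ∑ j, ∑ k, ∑ l, |L i j k l| * (|μ i| * |ν l|), ?_⟩
  rintro _ ⟨w, hw, rfl⟩
  simp only [objP, ← Finset.sum_neg_distrib]
  gcongr with i _ j _ k _ l _
  have hkl := hw.single_two_le (by omega) k l
  refine neg_abs_mul_le_mul ?_ ?_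
  · rw [single_two_add_single_two]
    exact hw.nonneg_two_nsmul (by simp [mdeg_eq_degree]; omega)
  · calc _ ≤ μ i * w (Finsupp.single (k, l) 2) := hw.single_two_add_single_two_le hs i k j l
      _ ≤ |μ i| * ν l :=
        mul_le_mul (le_abs_self _) hkl (hw.nonneg_single_two (by omega) _) (abs_nonneg _)
      _ ≤ |μ i| * |ν l| := mul_le_mul_of_nonneg_left (le_abs_self _) (abs_nonneg _)

end Bound

end Relaxations

theorem stmt2_general (m n r : ℕ) (hr : 0 < r)
    (μ : Fin m → ℝ) (ν : Fin n → ℝ)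
    (L : Fin m → Fin n → Fin m → Fin n → ℝ)
    (z : ((Fin m × Fin n) →₀ ℕ) → ℝ) (hz : SFeas m n r μ ν z)
    (Qz : ((Fin m × Fin n) →₀ ℕ) → ℝ)
    (hQeven : ∀ α : (Fin m × Fin n) →₀ ℕ, mdeg α ≤ 2 * r → Qz (α + α) = z α)
    (hQodd : ∀ β : (Fin m × Fin n) →₀ ℕ, (∃ q, Odd (β q)) → Qz β = 0) :
    PFeas m n (2 * r) μ ν Qz ∧
    objP m n L Qz = objS m n L z ∧
    valP m n (2 * r) μ ν L ≤ valS m n r μ ν L := by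
  have hQ : ∀ γ, mdeg γ ≤ 2 * (2 * r) → evenExt z γ = Qz γ := fun γ hγ =>
    (eq_evenExt z (fun α hα => two_nsmul α ▸ hQeven α hα) hQodd hγ).symm
  have hobj : ∀ i j k l, Qz (Finsupp.single (i, j) 2 + Finsupp.single (k, l) 2) =
      z (Finsupp.single (i, j) 1 + Finsupp.single (k, l) 1) := fun i j k l => by
    rw [single_two_add_single_two, two_nsmul, hQeven _ (by simp [mdeg_eq_degree]; omega)]
  refine ⟨(hz.pFeas_evenExt hr).congr (by omega) hQ, by simp only [objP, objS, hobj], ?_⟩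
  exact csInf_le_csInf (bddBelow_objP (by omega) L) ⟨_, z, hz, rfl⟩
    fun _ ⟨z', hz', hv⟩ => ⟨evenExt z', hz'.pFeas_evenExt hr, hv.trans (objP_evenExt L z').symm⟩

/-- The extension `Q(z)` defined by `Q(z)_{2α} = z_α` and `Q(z)_β = 0`
whenever `β` has an odd coordinate maps feasible points of (S-DGW-r) to feasible
points of (P-DGW-2r) with the same objective value; consequently
val(P-DGW-2r) ≤ val(S-DGW-r). -/
theorem stmt2 (m n r : ℕ) (hm : 0 < m) (hn : 0 < n) (hr : 0 < r)
    (μ : Fin m → ℝ) (ν : Fin n → ℝ) (hμ : IsProbVec μ) (hν : IsProbVec ν)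
    (L : Fin m → Fin n → Fin m → Fin n → ℝ)
    (z : ((Fin m × Fin n) →₀ ℕ) → ℝ) (hz : SFeas m n r μ ν z)
    (Qz : ((Fin m × Fin n) →₀ ℕ) → ℝ)
    (hQeven : ∀ α : (Fin m × Fin n) →₀ ℕ, mdeg α ≤ 2 * r → Qz (α + α) = z α)
    (hQodd : ∀ β : (Fin m × Fin n) →₀ ℕ, (∃ q, Odd (β q)) → Qz β = 0) :
    PFeas m n (2 * r) μ ν Qz ∧
    objP m n L Qz = objS m n L z ∧
    valP m n (2 * r) μ ν L ≤ valS m n r μ ν L :=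
  stmt2_general m n r hr μ ν L z hz Qz hQeven hQodd
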